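/- arXiv:0907.3873 — 2 statements merged into one kernel-verified Lean document; each statement's English description precedes it below -/
import Mathlib

section
/- Let n be a positive even integer and write n = 2^a \cdot b with b odd. Then there is a list containing each binary partition of n exactly once, in which every two consecutive partitions differ by a single elementary move, whose first entry is the partition of n into n parts each equal to 1, and whose last entry is the partition of n into b parts each equal to 2^a. -/
/-- A binary partition: a multiset of parts, each a power of two. -/
def IsBinaryPartition (P : Multiset ℕ) : Prop := ∀ p ∈ P, ∃ k : ℕ, p = 2 ^ k

/-- `P` and `Q` differ by an elementary move: for some `k`, `Q` is obtained from `P`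
by removing two copies of `2^k` and adding one copy of `2^(k+1)`, or vice versa. -/
def ElementaryMove (P Q : Multiset ℕ) : Prop :=
  ∃ k : ℕ, Q + {2 ^ k, 2 ^ k} = P + {2 ^ (k + 1)} ∨ P + {2 ^ k, 2 ^ k} = Q + {2 ^ (k + 1)}

/-!
For `m = 2^a c` with `c` odd, list the binary partitions of all numbers `≤ m` from `0` to
`c` parts `2^a`, consecutive entries differing by an elementary move or by adding or removing a
part `1`. Doubling every part and padding with `1`s up to `2m` maps these bijectively onto the
binary partitions of `2m` and turns both kinds of step into elementary moves, so the image of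
that list answers the theorem for `2m`. The list is a concatenation of blocks, one for each
`k ≤ m`, running through the binary partitions of `k`: for even `k` the sequence for `k`
itself (strong induction), for odd `k` the reversed sequence for `k - 1` with a part `1` added
to every entry. Each block ends at `equalParts k`, and the next one starts at
`equalParts k + {1}`.
-/

structure IsGrayPath {α : Type*} (r : α → α → Prop) (s : Set α) (L : List α) (a b : α) :
    Prop where
  nodup : L.Nodup
  mem_iff : ∀ x, x ∈ L ↔ x ∈ s
  isChain : L.IsChain r
  head?_eq : L.head? = some a
  getLast?_eq : L.getLast? = some b

namespace IsGrayPath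

variable {α β : Type*} {r : α → α → Prop} {s t : Set α} {L M : List α} {a b c d : α}

theorem singleton (r : α → α → Prop) (a : α) : IsGrayPath r {a} [a] a a :=
  ⟨List.nodup_singleton a, by simp, List.isChain_singleton a, rfl, rfl⟩

theorem mono {r' : α → α → Prop} (h : IsGrayPath r s L a b) (hr : ∀ x y, r x y → r' x y) :
    IsGrayPath r' s L a b :=
  { h with isChain := h.isChain.imp hr }

theorem reverse (h : IsGrayPath r s L a b) : IsGrayPath (flip r) s L.reverse b a where
  nodup := List.nodup_reverse.2 h.nodup
  mem_iff x := List.mem_reverse.trans (h.mem_iff x)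
  isChain := List.isChain_reverse.2 h.isChain
  head?_eq := by rw [List.head?_reverse, h.getLast?_eq]
  getLast?_eq := by rw [List.getLast?_reverse, h.head?_eq]

theorem map {r' : β → β → Prop} {f : α → β} (h : IsGrayPath r s L a b) (hf : Set.InjOn f s)
    (hr : ∀ x ∈ s, ∀ y ∈ s, r x y → r' (f x) (f y)) :
    IsGrayPath r' (f '' s) (L.map f) (f a) (f b) where
  nodup := h.nodup.map_on fun x hx y hy => hf ((h.mem_iff x).1 hx) ((h.mem_iff y).1 hy)
  mem_iff y := by simp [h.mem_iff]
  isChain := (List.isChain_map f).2 <| h.isChain.imp_of_mem_imp fun x y hx hy =>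
    hr x ((h.mem_iff x).1 hx) y ((h.mem_iff y).1 hy)
  head?_eq := by rw [List.head?_map, h.head?_eq, Option.map_some]
  getLast?_eq := by rw [List.getLast?_map, h.getLast?_eq, Option.map_some]

theorem append (h₁ : IsGrayPath r s L a b) (h₂ : IsGrayPath r t M c d) (hst : Disjoint s t)
    (hbc : r b c) : IsGrayPath r (s ∪ t) (L ++ M) a d where
  nodup := h₁.nodup.append h₂.nodup fun x hx hx' =>
    Set.disjoint_left.1 hst ((h₁.mem_iff x).1 hx) ((h₂.mem_iff x).1 hx')
  mem_iff x := by simp [h₁.mem_iff, h₂.mem_iff]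
  isChain := h₁.isChain.append h₂.isChain (by simp [h₁.getLast?_eq, h₂.head?_eq, hbc])
  head?_eq := by rw [List.head?_append, h₁.head?_eq]; rfl
  getLast?_eq := by rw [List.getLast?_append, h₂.getLast?_eq]; rfl

end IsGrayPath

open Multiset

def binaryPartitions (n : ℕ) : Set (Multiset ℕ) := {P | P.sum = n ∧ IsBinaryPartition P}

def binaryPartitionsLE (m : ℕ) : Set (Multiset ℕ) := {P | P.sum ≤ m ∧ IsBinaryPartition P}

@[simp]
theorem sum_map_two_mul (Q : Multiset ℕ) : (Q.map (2 * ·)).sum = 2 * Q.sum := by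
  simpa using sum_map_mul_left (s := Q) (f := id) (a := 2)

section IsBinaryPartition

variable {P Q : Multiset ℕ}

theorem isBinaryPartition_add :
    IsBinaryPartition (P + Q) ↔ IsBinaryPartition P ∧ IsBinaryPartition Q := by
  simp only [IsBinaryPartition, Multiset.mem_add, or_imp, forall_and]

theorem isBinaryPartition_replicate (c k : ℕ) : IsBinaryPartition (replicate c (2 ^ k)) :=
  fun _ hp => ⟨k, eq_of_mem_replicate hp⟩

theorem IsBinaryPartition.map_two_mul (hQ : IsBinaryPartition Q) :
    IsBinaryPartition (Q.map (2 * ·)) := by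
  simp only [IsBinaryPartition, Multiset.mem_map, forall_exists_index, and_imp,
    forall_apply_eq_imp_iff₂]
  intro q hq
  obtain ⟨k, rfl⟩ := hQ q hq
  exact ⟨k + 1, (pow_succ' 2 k).symm⟩

theorem IsBinaryPartition.eq_zero_of_sum_eq_zero (hP : IsBinaryPartition P) (h : P.sum = 0) :
    P = 0 :=
  eq_zero_of_forall_notMem fun p hp => by
    obtain ⟨k, rfl⟩ := hP p hp
    exact pow_ne_zero k two_ne_zero (sum_eq_zero_iff.1 h _ hp)

theorem IsBinaryPartition.exists_eq_map_two_mul_add_replicate_one (hP : IsBinaryPartition P) :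
    ∃ Q k, IsBinaryPartition Q ∧ P = Q.map (2 * ·) + replicate k 1 := by
  induction P using Multiset.induction_on with
  | empty => exact ⟨0, 0, by simp [IsBinaryPartition], by simp⟩
  | cons p P ih =>
    rw [← singleton_add, isBinaryPartition_add] at hP
    obtain ⟨Q, k, hQ, rfl⟩ := ih hP.2
    obtain ⟨j, hj⟩ := hP.1 p (mem_singleton_self p)
    cases j with
    | zero => exact ⟨Q, k + 1, hQ, by simp [hj, replicate_succ]⟩
    | succ j =>
      refine ⟨2 ^ j ::ₘ Q, k, ?_, by simp [hj, pow_succ']⟩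
      rw [← singleton_add, isBinaryPartition_add]
      exact ⟨by simpa using isBinaryPartition_replicate 1 j, hQ⟩

theorem IsBinaryPartition.one_mem_of_odd_sum (hP : IsBinaryPartition P) (h : Odd P.sum) :
    1 ∈ P := by
  obtain ⟨Q, k, -, rfl⟩ := hP.exists_eq_map_two_mul_add_replicate_one
  have hk : k ≠ 0 := by
    rintro rfl
    simp only [replicate_zero, add_zero, sum_map_two_mul] at h
    exact Nat.not_odd_iff_even.2 (even_two_mul _) h
  exact mem_add.2 (Or.inr (mem_replicate.2 ⟨hk, rfl⟩))

end IsBinaryPartition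

namespace ElementaryMove

variable {P Q : Multiset ℕ}

theorem symm (h : ElementaryMove P Q) : ElementaryMove Q P :=
  let ⟨k, hk⟩ := h; ⟨k, hk.symm⟩

theorem add_right (h : ElementaryMove P Q) (R : Multiset ℕ) :
    ElementaryMove (P + R) (Q + R) := by
  obtain ⟨k, hk | hk⟩ := h
  · exact ⟨k, Or.inl (by rw [add_right_comm, hk, add_right_comm])⟩
  · exact ⟨k, Or.inr (by rw [add_right_comm, hk, add_right_comm])⟩

theorem sum_eq (h : ElementaryMove P Q) : P.sum = Q.sum := by
  obtain ⟨k, hk | hk⟩ := h <;>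
  · have := congrArg Multiset.sum hk
    simp only [sum_add, insert_eq_cons, sum_cons, sum_singleton, pow_succ] at this
    omega

theorem map_two_mul (h : ElementaryMove P Q) :
    ElementaryMove (P.map (2 * ·)) (Q.map (2 * ·)) := by
  obtain ⟨k, hk⟩ := h
  refine ⟨k + 1, hk.imp ?_ ?_⟩ <;>
  · intro hk
    simpa [pow_succ'] using congrArg (Multiset.map (2 * ·)) hk

end ElementaryMove

theorem elementaryMove_add_one_one (P : Multiset ℕ) : ElementaryMove (P + {1, 1}) (P + {2}) :=
  ⟨0, Or.inl (add_right_comm _ _ _)⟩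

def MoveOrAddOne (P Q : Multiset ℕ) : Prop :=
  ElementaryMove P Q ∨ Q = P + {1} ∨ P = Q + {1}

def doubleAndPad (m : ℕ) (Q : Multiset ℕ) : Multiset ℕ :=
  Q.map (2 * ·) + replicate (2 * (m - Q.sum)) 1

section doubleAndPad

variable {m : ℕ} {P Q : Multiset ℕ}

theorem sum_doubleAndPad (h : Q.sum ≤ m) : (doubleAndPad m Q).sum = 2 * m := by
  simp only [doubleAndPad, sum_add, sum_map_two_mul, sum_replicate, smul_eq_mul, mul_one]
  omega

theorem doubleAndPad_injective (m : ℕ) : Function.Injective (doubleAndPad m) := by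
  intro P Q h
  have hones : 2 * (m - P.sum) = 2 * (m - Q.sum) := by
    have hmap : ∀ R : Multiset ℕ, count 1 (R.map (2 * ·)) = 0 := fun R =>
      count_eq_zero.2 (by simp only [mem_map, not_exists, not_and]; omega)
    simpa [doubleAndPad, hmap] using congrArg (count 1) h
  rw [doubleAndPad, doubleAndPad, hones] at h
  exact map_injective (fun x y hxy => by omega) (add_right_cancel h)

theorem image_doubleAndPad :
    doubleAndPad m '' binaryPartitionsLE m = binaryPartitions (2 * m) := by
  ext P
  constructor
  · rintro ⟨Q, ⟨hs, hb⟩, rfl⟩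
    exact ⟨sum_doubleAndPad hs,
      isBinaryPartition_add.2 ⟨hb.map_two_mul, isBinaryPartition_replicate _ 0⟩⟩
  · rintro ⟨hs, hb⟩
    obtain ⟨Q, k, hQ, rfl⟩ := hb.exists_eq_map_two_mul_add_replicate_one
    simp only [sum_add, sum_map_two_mul, sum_replicate, smul_eq_mul, mul_one] at hs
    refine ⟨Q, ⟨by omega, hQ⟩, ?_⟩
    rw [doubleAndPad, show 2 * (m - Q.sum) = k by omega]

theorem elementaryMove_doubleAndPad_add_one (h : Q.sum + 1 ≤ m) :
    ElementaryMove (doubleAndPad m Q) (doubleAndPad m (Q + {1})) := by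
  have hpad : 2 * (m - Q.sum) = 2 * (m - (Q + {1}).sum) + 2 := by simp; omega
  simp only [doubleAndPad, hpad, replicate_add, map_add, map_singleton]
  convert elementaryMove_add_one_one (Q.map (2 * ·) + replicate (2 * (m - (Q + {1}).sum)) 1)
    using 1
  · rw [add_assoc]; rfl
  · rw [add_right_comm]

theorem elementaryMove_doubleAndPad (hP : P.sum ≤ m) (hQ : Q.sum ≤ m) (h : MoveOrAddOne P Q) :
    ElementaryMove (doubleAndPad m P) (doubleAndPad m Q) := by
  rcases h with h | rfl | rfl
  · rw [doubleAndPad, doubleAndPad, h.sum_eq]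
    exact h.map_two_mul.add_right _
  · exact elementaryMove_doubleAndPad_add_one (by simpa using hQ)
  · exact (elementaryMove_doubleAndPad_add_one (by simpa using hP)).symm

end doubleAndPad

def equalParts (n : ℕ) : Multiset ℕ := replicate (ordCompl[2] n) (2 ^ n.factorization 2)

theorem equalParts_two_pow_mul {c : ℕ} (k : ℕ) (hc : Odd c) :
    equalParts (2 ^ k * c) = replicate c (2 ^ k) := by
  have hc2 : ¬ 2 ∣ c := hc.not_two_dvd_nat
  have hk : (2 ^ k * c).factorization 2 = k := by
    simp [Nat.factorization_mul, hc.pos.ne', Nat.factorization_eq_zero_of_not_dvd hc2,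
      Nat.prime_two.factorization_self]
  rw [equalParts, Nat.ordCompl_pow_mul_of_not_dvd k Nat.prime_two hc2, hk]

theorem equalParts_of_odd {n : ℕ} (hn : Odd n) : equalParts n = replicate n 1 := by
  simpa using equalParts_two_pow_mul 0 hn

theorem sum_equalParts (n : ℕ) : (equalParts n).sum = n := by
  rw [equalParts, sum_replicate, smul_eq_mul, mul_comm]
  exact Nat.ordProj_mul_ordCompl_eq_self n 2

theorem equalParts_two_mul (n : ℕ) : equalParts (2 * n) = (equalParts n).map (2 * ·) := by
  rcases eq_or_ne n 0 with rfl | hn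
  · simp [equalParts]
  obtain ⟨k, c, hc, rfl⟩ := Nat.exists_eq_two_pow_mul_odd hn
  rw [← mul_assoc, ← pow_succ', equalParts_two_pow_mul _ hc, equalParts_two_pow_mul _ hc,
    map_replicate, pow_succ']

theorem doubleAndPad_equalParts (n : ℕ) :
    doubleAndPad n (equalParts n) = equalParts (2 * n) := by
  simp [doubleAndPad, sum_equalParts, equalParts_two_mul]

def HasGrayCode (n : ℕ) : Prop :=
  ∃ L, IsGrayPath ElementaryMove (binaryPartitions n) L (replicate n 1) (equalParts n)

theorem binaryPartitionsLE_zero : binaryPartitionsLE 0 = {0} := by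
  ext P
  refine ⟨fun ⟨hs, hP⟩ => hP.eq_zero_of_sum_eq_zero (Nat.le_zero.1 hs), ?_⟩
  rintro rfl
  exact ⟨le_rfl, fun p hp => absurd hp (notMem_zero p)⟩

theorem hasGrayCode_zero : HasGrayCode 0 := by
  have h : binaryPartitions 0 = {0} := by
    rw [← binaryPartitionsLE_zero]
    simp only [binaryPartitions, binaryPartitionsLE, Nat.le_zero]
  exact ⟨[0], h ▸ IsGrayPath.singleton _ 0⟩

theorem binaryPartitionsLE_succ (m : ℕ) :
    binaryPartitionsLE (m + 1) = binaryPartitionsLE m ∪ binaryPartitions (m + 1) := by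
  ext P
  simp only [binaryPartitionsLE, binaryPartitions, Set.mem_union, Set.mem_ofPred_eq,
    ← or_and_right, Nat.le_succ_iff]

theorem disjoint_binaryPartitionsLE_binaryPartitions_succ (m : ℕ) :
    Disjoint (binaryPartitionsLE m) (binaryPartitions (m + 1)) :=
  Set.disjoint_left.2 fun _ h₁ h₂ => by have := h₁.1; have := h₂.1; omega

theorem image_add_one_binaryPartitions {m : ℕ} (hm : Even m) :
    (· + {1}) '' binaryPartitions m = binaryPartitions (m + 1) := by
  ext P
  constructor
  · rintro ⟨Q, ⟨hs, hQ⟩, rfl⟩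
    refine ⟨by simp [hs], isBinaryPartition_add.2 ⟨hQ, ?_⟩⟩
    simpa using isBinaryPartition_replicate 1 0
  · rintro ⟨hs, hP⟩
    have h1 := hP.one_mem_of_odd_sum (hs ▸ hm.add_one)
    refine ⟨P.erase 1, ⟨?_, fun p hp => hP p (mem_of_mem_erase hp)⟩, ?_⟩
    · have := sum_erase h1
      omega
    · change P.erase 1 + {1} = P
      rw [add_comm, singleton_add, cons_erase h1]

theorem exists_isGrayPath_binaryPartitions_succ (m : ℕ)
    (ih : ∀ k ≤ m + 1, Even k → HasGrayCode k) :
    ∃ B, IsGrayPath MoveOrAddOne (binaryPartitions (m + 1)) B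
      (equalParts m + {1}) (equalParts (m + 1)) := by
  have hones : replicate m 1 + {1} = replicate (m + 1) 1 := by
    rw [add_comm, singleton_add, replicate_succ]
  rcases Nat.even_or_odd m with hm | hm
  · obtain ⟨L, hL⟩ := ih m m.le_succ hm
    have hB := hL.reverse.map (r' := MoveOrAddOne) (f := (· + {1}))
      (fun _ _ _ _ h => add_right_cancel h) fun _ _ _ _ h => Or.inl (h.symm.add_right _)
    rw [image_add_one_binaryPartitions hm, hones, ← equalParts_of_odd hm.add_one] at hB
    exact ⟨_, hB⟩
  · obtain ⟨L, hL⟩ := ih (m + 1) le_rfl hm.add_one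
    rw [equalParts_of_odd hm, hones]
    exact ⟨L, hL.mono fun _ _ h => Or.inl h⟩

theorem exists_isGrayPath_binaryPartitionsLE (m : ℕ) (ih : ∀ k ≤ m, Even k → HasGrayCode k) :
    ∃ S, IsGrayPath MoveOrAddOne (binaryPartitionsLE m) S 0 (equalParts m) := by
  induction m with
  | zero => exact ⟨[0], binaryPartitionsLE_zero ▸ IsGrayPath.singleton _ 0⟩
  | succ m ihm =>
    obtain ⟨S, hS⟩ := ihm fun k hk => ih k (hk.trans m.le_succ)
    obtain ⟨B, hB⟩ := exists_isGrayPath_binaryPartitions_succ m ih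
    refine ⟨S ++ B, ?_⟩
    rw [binaryPartitionsLE_succ]
    exact hS.append hB (disjoint_binaryPartitionsLE_binaryPartitions_succ m)
      (Or.inr (Or.inl rfl))

theorem hasGrayCode_of_even (n : ℕ) (hn : Even n) : HasGrayCode n := by
  induction n using Nat.strong_induction_on with
  | _ n ih =>
  obtain ⟨m, rfl⟩ := hn
  rcases eq_or_ne m 0 with rfl | hm
  · exact hasGrayCode_zero
  obtain ⟨S, hS⟩ := exists_isGrayPath_binaryPartitionsLE m fun k hk => ih k (by omega)
  refine ⟨S.map (doubleAndPad m), ?_⟩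
  have hL := hS.map (r' := ElementaryMove) (doubleAndPad_injective m).injOn
    fun _ hP _ hQ h => elementaryMove_doubleAndPad hP.1 hQ.1 h
  have hstart : doubleAndPad m 0 = replicate (2 * m) 1 := by simp [doubleAndPad]
  rwa [image_doubleAndPad, hstart, doubleAndPad_equalParts, two_mul] at hL

theorem gray_sequence_first_and_last_general (n a c : ℕ) (heven : Even n)
    (hc : Odd c) (hfact : n = 2 ^ a * c) :
    ∃ L : List (Multiset ℕ),
      L.Nodup ∧
      (∀ P : Multiset ℕ, P ∈ L ↔ P.sum = n ∧ IsBinaryPartition P) ∧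
      L.Chain' ElementaryMove ∧
      L.head? = some (Multiset.replicate n 1) ∧
      L.getLast? = some (Multiset.replicate c (2 ^ a)) := by
  obtain ⟨L, hL⟩ := hasGrayCode_of_even n heven
  have hlast : equalParts n = replicate c (2 ^ a) := hfact ▸ equalParts_two_pow_mul a hc
  rw [hlast] at hL
  exact ⟨L, hL.nodup, hL.mem_iff, hL.isChain, hL.head?_eq, hL.getLast?_eq⟩

theorem gray_sequence_first_and_last (n a c : ℕ) (hn : 0 < n) (heven : Even n)
    (hc : Odd c) (hfact : n = 2 ^ a * c) :
    ∃ L : List (Multiset ℕ),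
      L.Nodup ∧
      (∀ P : Multiset ℕ, P ∈ L ↔ P.sum = n ∧ IsBinaryPartition P) ∧
      L.Chain' ElementaryMove ∧
      L.head? = some (Multiset.replicate n 1) ∧
      L.getLast? = some (Multiset.replicate c (2 ^ a)) :=
  gray_sequence_first_and_last_general n a c heven hc hfact
end

section
/- There exists a bijection B from the positive integers onto the set of all even binary partitions such that B_1 is the empty partition, the sums |B_k| are nondecreasing, each B_{k+1} is obtained from B_k by an elementary move or by adding a single new part equal to 2, and moreover for every even n \ge 2, writing n = 2^a \cdot b with b odd: the last term of B with sum n is the partition consisting of b parts each equal to 2^a, and the first term of B with sum n is obtained from the last term with sum n-2 by adding one part equal to 2 (for n = 2 it is the single part 2). -/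
/-- An even binary partition: a multiset of parts, each a power of two that is at least 2. -/
def IsEvenBinaryPartition (P : Multiset ℕ) : Prop := ∀ p ∈ P, ∃ k : ℕ, 1 ≤ k ∧ p = 2 ^ k

/-- `P` and `Q` differ by an elementary move with `k ≥ 1`: `Q` is obtained from `P`
by removing two copies of `2^k` and adding one copy of `2^(k+1)`, or vice versa. -/
def EvenElementaryMove (P Q : Multiset ℕ) : Prop :=
  ∃ k : ℕ, 1 ≤ k ∧
    (Q + {2 ^ k, 2 ^ k} = P + {2 ^ (k + 1)} ∨ P + {2 ^ k, 2 ^ k} = Q + {2 ^ (k + 1)})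

/-!
The sequence lists the even binary partitions of `0, 2, 4, …` in turn, those of `2 * m` forming
the block `grayList m`. The block starts with the partitions having a part `2`: those of
`2 * m - 2`, in reverse order, each with a `2` added. Hence it begins with the last partition of
`2 * m - 2` plus a `2`, and consecutive entries still differ by a move. For `m` even the
partitions without a part `2` follow: the doubles of those of `m`, in order. Doubling preserves
moves, and the seam between the two halves is the move `D + 2 + 2 → D + 4`. The last partition of
`2 * m` is the double of the last one of `m` when `m` is even, and `m` parts `2` when `m` is odd,
which gives `c` parts `2 ^ a` for `2 * m = 2 ^ a * c`.
-/

def doubleParts (P : Multiset ℕ) : Multiset ℕ := P.map (2 * ·)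

lemma sum_doubleParts (P : Multiset ℕ) : (doubleParts P).sum = 2 * P.sum := by
  simpa [doubleParts] using Multiset.sum_map_mul_left (s := P) (a := 2) (f := id)

lemma doubleParts_add (P Q : Multiset ℕ) : doubleParts (P + Q) = doubleParts P + doubleParts Q :=
  Multiset.map_add _ _ _

lemma doubleParts_injective : Function.Injective doubleParts :=
  Multiset.map_injective fun a b h => by simpa using h

namespace IsEvenBinaryPartition

variable {P : Multiset ℕ}

lemma two_le (hP : IsEvenBinaryPartition P) {p : ℕ} (hp : p ∈ P) : 2 ≤ p := by
  obtain ⟨k, hk, rfl⟩ := hP p hp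
  simpa using Nat.pow_le_pow_right two_pos hk

lemma two_dvd_sum (hP : IsEvenBinaryPartition P) : 2 ∣ P.sum :=
  Multiset.dvd_sum fun p hp => by
    obtain ⟨k, hk, rfl⟩ := hP p hp
    exact dvd_pow_self 2 (by omega)

lemma eq_zero_of_sum_eq_zero (hP : IsEvenBinaryPartition P) (h : P.sum = 0) : P = 0 :=
  Multiset.eq_zero_of_forall_notMem fun p hp => by
    have := hP.two_le hp
    have := Multiset.sum_eq_zero_iff.mp h p hp
    omega

lemma add_two (hP : IsEvenBinaryPartition P) : IsEvenBinaryPartition (P + {2}) := by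
  intro p hp
  rcases Multiset.mem_add.mp hp with hp | hp
  · exact hP p hp
  · exact ⟨1, le_rfl, by simpa using hp⟩

lemma doubleParts (hP : IsEvenBinaryPartition P) : IsEvenBinaryPartition (doubleParts P) := by
  intro p hp
  obtain ⟨q, hq, rfl⟩ := Multiset.mem_map.mp hp
  obtain ⟨k, hk, rfl⟩ := hP q hq
  exact ⟨k + 1, by omega, (pow_succ' 2 k).symm⟩

lemma two_notMem_doubleParts (hP : IsEvenBinaryPartition P) : 2 ∉ _root_.doubleParts P := by
  intro h
  obtain ⟨q, hq, hq2⟩ := Multiset.mem_map.mp h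
  have := hP.two_le hq
  omega

lemma exists_eq_doubleParts (hP : IsEvenBinaryPartition P) (h2 : 2 ∉ P) :
    ∃ R, IsEvenBinaryPartition R ∧ P = _root_.doubleParts R := by
  have hexp : ∀ p ∈ P, ∃ k, 1 ≤ k ∧ p = 2 ^ (k + 1) := fun p hp => by
    obtain ⟨k, hk, rfl⟩ := hP p hp
    have : k ≠ 1 := by rintro rfl; exact h2 hp
    exact ⟨k - 1, by omega, by rw [Nat.sub_add_cancel hk]⟩
  refine ⟨P.map (· / 2), fun r hr => ?_, ?_⟩
  · obtain ⟨p, hp, rfl⟩ := Multiset.mem_map.mp hr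
    obtain ⟨k, hk, rfl⟩ := hexp p hp
    exact ⟨k, hk, by rw [pow_succ, Nat.mul_div_cancel _ two_pos]⟩
  · rw [_root_.doubleParts, Multiset.map_map]
    refine ((Multiset.map_congr rfl fun p hp => ?_).trans (Multiset.map_id P)).symm
    obtain ⟨k, -, rfl⟩ := hexp p hp
    simp [pow_succ, mul_comm]

end IsEvenBinaryPartition

lemma EvenElementaryMove.symm {P Q : Multiset ℕ} (h : EvenElementaryMove P Q) :
    EvenElementaryMove Q P := by
  obtain ⟨k, hk, h⟩ := h
  exact ⟨k, hk, h.symm⟩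

lemma EvenElementaryMove.add_right {P Q : Multiset ℕ} (h : EvenElementaryMove P Q)
    (X : Multiset ℕ) : EvenElementaryMove (P + X) (Q + X) := by
  obtain ⟨k, hk, h⟩ := h
  refine ⟨k, hk, h.imp ?_ ?_⟩ <;>
  · intro h
    rw [add_right_comm, h, add_right_comm]

lemma EvenElementaryMove.doubleParts {P Q : Multiset ℕ} (h : EvenElementaryMove P Q) :
    EvenElementaryMove (doubleParts P) (doubleParts Q) := by
  obtain ⟨k, hk, h⟩ := h
  refine ⟨k + 1, by omega, h.imp ?_ ?_⟩ <;>
  · intro h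
    simpa [_root_.doubleParts, Multiset.insert_eq_cons, pow_succ, mul_comm] using
      congrArg _root_.doubleParts h

lemma evenElementaryMove_add_two_add_two (X : Multiset ℕ) :
    EvenElementaryMove (X + {2} + {2}) (X + {4}) :=
  ⟨1, le_rfl, Or.inl (by norm_num [Multiset.insert_eq_cons, ← Multiset.singleton_add]; abel)⟩

def grayList : ℕ → List (Multiset ℕ)
  | 0 => [0]
  | m + 1 => (grayList m).reverse.map (· + {2}) ++
      if (m + 1) % 2 = 0 then (grayList ((m + 1) / 2)).map doubleParts else []
  decreasing_by all_goals omega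

lemma grayList_zero : grayList 0 = [0] := by
  rw [grayList]

lemma grayList_succ (m : ℕ) : grayList (m + 1) = (grayList m).reverse.map (· + {2}) ++
    if (m + 1) % 2 = 0 then (grayList ((m + 1) / 2)).map doubleParts else [] := by
  rw [grayList]

lemma grayList_two_mul_add_one (m : ℕ) :
    grayList (2 * m + 1) = (grayList (2 * m)).reverse.map (· + {2}) := by
  rw [grayList_succ, if_neg (by omega), List.append_nil]

lemma grayList_two_mul_add_two (m : ℕ) : grayList (2 * m + 2) =
    (grayList (2 * m + 1)).reverse.map (· + {2}) ++ (grayList (m + 1)).map doubleParts := by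
  rw [grayList_succ, if_pos (by omega), show (2 * m + 2) / 2 = m + 1 by omega]

lemma grayList_ne_nil (m : ℕ) : grayList m ≠ [] := by
  cases m with
  | zero => simp [grayList_zero]
  | succ m => simp [grayList_succ, grayList_ne_nil m]

lemma mem_grayList_iff {m : ℕ} {P : Multiset ℕ} :
    P ∈ grayList m ↔ IsEvenBinaryPartition P ∧ P.sum = 2 * m := by
  induction m using Nat.strong_induction_on generalizing P with
  | _ m ih =>
  cases m with
  | zero =>
    simp only [grayList_zero, List.mem_singleton, mul_zero]
    exact ⟨by rintro rfl; simp [IsEvenBinaryPartition], fun h => h.1.eq_zero_of_sum_eq_zero h.2⟩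
  | succ m =>
    simp only [grayList_succ, List.mem_append, List.mem_map, List.mem_reverse,
      List.mem_ite_nil_right, ih m (by omega), ih ((m + 1) / 2) (by omega)]
    constructor
    · rintro (⟨Q, ⟨hQ, hQsum⟩, rfl⟩ | ⟨hm, R, ⟨hR, hRsum⟩, rfl⟩)
      · exact ⟨hQ.add_two, by simp [hQsum]; ring⟩
      · exact ⟨hR.doubleParts, by rw [sum_doubleParts, hRsum]; omega⟩
    · rintro ⟨hP, hsum⟩
      by_cases h2 : 2 ∈ P
      · have hPQ : P.erase 2 + {2} = P := by
          rw [add_comm, Multiset.singleton_add, Multiset.cons_erase h2]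
        refine Or.inl ⟨P.erase 2, ⟨fun p hp => hP p (Multiset.mem_of_mem_erase hp), ?_⟩, hPQ⟩
        have := congrArg Multiset.sum hPQ
        simp only [Multiset.sum_add, Multiset.sum_singleton] at this
        omega
      · obtain ⟨R, hR, rfl⟩ := hP.exists_eq_doubleParts h2
        have := hR.two_dvd_sum
        rw [sum_doubleParts] at hsum
        exact Or.inr ⟨by omega, R, ⟨hR, by omega⟩, rfl⟩

lemma nodup_grayList (m : ℕ) : (grayList m).Nodup := by
  induction m using Nat.strong_induction_on with
  | _ m ih =>
  cases m with
  | zero => simp [grayList_zero]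
  | succ m =>
    rw [grayList_succ]
    refine ((List.nodup_reverse.mpr (ih m (by omega))).map (add_left_injective _)).append ?_ ?_
    · split_ifs
      · exact (ih _ (by omega)).map doubleParts_injective
      · exact List.nodup_nil
    · -- the partitions of the first block have a part `2`, doubles of even binary partitions do not
      intro P hP hP'
      simp only [List.mem_map, List.mem_reverse, List.mem_ite_nil_right] at hP hP'
      obtain ⟨Q, -, rfl⟩ := hP
      obtain ⟨-, R, hR, hRQ⟩ := hP'
      exact (mem_grayList_iff.mp hR).1.two_notMem_doubleParts (hRQ ▸ by simp)

lemma head?_grayList_succ (m : ℕ) :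
    (grayList (m + 1)).head? = (grayList m).getLast?.map (· + {2}) := by
  rw [grayList_succ, List.head?_append_of_ne_nil _ (by simp [grayList_ne_nil]), List.head?_map,
    List.head?_reverse]

lemma getLast?_grayList_two_mul_add_one (m : ℕ) :
    (grayList (2 * m + 1)).getLast? = (grayList (2 * m)).head?.map (· + {2}) := by
  rw [grayList_two_mul_add_one, List.getLast?_map, List.getLast?_reverse]

lemma getLast?_grayList_two_mul (m : ℕ) :
    (grayList (2 * m)).getLast? = (grayList m).getLast?.map doubleParts := by
  cases m with
  | zero => simp [grayList_zero, doubleParts]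
  | succ m =>
    rw [show 2 * (m + 1) = 2 * m + 2 by ring, grayList_two_mul_add_two,
      List.getLast?_append_of_ne_nil _ (by simp [grayList_ne_nil]), List.getLast?_map]

lemma getLast?_grayList_of_odd {c : ℕ} (hc : Odd c) :
    (grayList c).getLast? = some (Multiset.replicate c 2) := by
  obtain ⟨j, rfl⟩ := hc
  induction j with
  | zero =>
    rw [getLast?_grayList_two_mul_add_one]
    simp [grayList_zero, Multiset.replicate_one]
  | succ j ih =>
    rw [getLast?_grayList_two_mul_add_one, show 2 * (j + 1) = 2 * j + 1 + 1 by ring,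
      head?_grayList_succ, ih, Multiset.replicate_add (2 * j + 1 + 1) 1,
      Multiset.replicate_add (2 * j + 1) 1, Multiset.replicate_one]
    rfl

lemma getLast?_grayList_two_pow_mul {c : ℕ} (hc : Odd c) (v : ℕ) :
    (grayList (2 ^ v * c)).getLast? = some (Multiset.replicate c (2 ^ (v + 1))) := by
  induction v with
  | zero => simpa using getLast?_grayList_of_odd hc
  | succ v ih =>
    rw [pow_succ', mul_assoc, getLast?_grayList_two_mul, ih]
    simp [doubleParts, Multiset.map_replicate, pow_succ']

lemma isChain_grayList (m : ℕ) : (grayList m).IsChain EvenElementaryMove := by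
  induction m using Nat.strong_induction_on with
  | _ m ih =>
  have reversed_block : ∀ j < m,
      ((grayList j).reverse.map (· + {2})).IsChain EvenElementaryMove := fun j hj => by
    rw [List.isChain_map, List.isChain_reverse]
    exact (ih j hj).imp fun _ _ h => h.symm.add_right _
  obtain ⟨j, rfl | rfl⟩ := Nat.even_or_odd' m
  · cases j with
    | zero => simp [grayList_zero]
    | succ j =>
      rw [show 2 * (j + 1) = 2 * j + 2 by ring, grayList_two_mul_add_two]
      refine (reversed_block _ (by omega)).append
        (List.isChain_map _ |>.mpr <| (ih _ (by omega)).imp fun _ _ h => h.doubleParts) ?_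
      -- the seam joins `D + {2} + {2}` to `D + {4}`, where `D` is the last partition of `4 * j`
      simp only [List.getLast?_map, List.getLast?_reverse, List.head?_map, head?_grayList_succ,
        getLast?_grayList_two_mul, List.getLast?_eq_some_getLast (grayList_ne_nil j),
        Option.map_some, Option.mem_def, Option.some.injEq]
      rintro _ rfl _ rfl
      simpa [doubleParts_add, doubleParts] using evenElementaryMove_add_two_add_two _
  · rw [grayList_two_mul_add_one]
    exact reversed_block _ (by omega)

section Concatenation

variable {α : Type*}

def blockStart (L : ℕ → List α) : ℕ → ℕ
  | 0 => 0
  | m + 1 => blockStart L m + (L m).length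

def blockIndex (L : ℕ → List α) (k : ℕ) : ℕ :=
  Nat.findGreatest (fun m => blockStart L m ≤ k) k

/-- The infinite concatenation `L 0 ++ L 1 ++ ⋯` as a sequence: position `k` lies in the block
`L (blockIndex L k)`, which starts at position `blockStart L (blockIndex L k)`. -/
def concatSeq [Inhabited α] (L : ℕ → List α) (k : ℕ) : α :=
  (L (blockIndex L k)).getD (k - blockStart L (blockIndex L k)) default

variable {L : ℕ → List α}

lemma blockStart_strictMono (hL : ∀ m, L m ≠ []) : StrictMono (blockStart L) :=
  strictMono_nat_of_lt_succ fun m => by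
    simpa [blockStart] using List.length_pos_iff.mpr (hL m)

lemma gc_blockStart_blockIndex (hL : ∀ m, L m ≠ []) :
    GaloisConnection (blockStart L) (blockIndex L) := fun _ k =>
  ⟨fun h => Nat.le_findGreatest ((blockStart_strictMono hL).le_apply.trans h) h,
    fun h => ((blockStart_strictMono hL).monotone h).trans <|
      Nat.findGreatest_spec (P := fun m => blockStart L m ≤ k) (Nat.zero_le k) (Nat.zero_le k)⟩

lemma blockIndex_eq_iff (hL : ∀ m, L m ≠ []) {k m : ℕ} :
    blockIndex L k = m ↔ blockStart L m ≤ k ∧ k < blockStart L (m + 1) := by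
  have := gc_blockStart_blockIndex hL m k
  have := gc_blockStart_blockIndex hL (m + 1) k
  omega

lemma exists_eq_blockStart_add (hL : ∀ m, L m ≠ []) (k : ℕ) :
    ∃ m i, ∃ _ : i < (L m).length, k = blockStart L m + i := by
  obtain ⟨h₁, h₂⟩ := (blockIndex_eq_iff hL (k := k)).mp rfl
  exact ⟨blockIndex L k, k - blockStart L (blockIndex L k), by simp [blockStart] at h₂; omega,
    by omega⟩

variable [Inhabited α]

lemma concatSeq_blockStart_add (hL : ∀ m, L m ≠ []) {m i : ℕ} (hi : i < (L m).length) :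
    concatSeq L (blockStart L m + i) = (L m)[i] := by
  have hm : blockIndex L (blockStart L m + i) = m :=
    (blockIndex_eq_iff hL).mpr ⟨by omega, by simp [blockStart]; omega⟩
  simp only [concatSeq, hm, Nat.add_sub_cancel_left]
  exact List.getD_eq_getElem _ _ hi

lemma concatSeq_mem (hL : ∀ m, L m ≠ []) (k : ℕ) : concatSeq L k ∈ L (blockIndex L k) := by
  obtain ⟨m, i, hi, rfl⟩ := exists_eq_blockStart_add hL k
  rw [concatSeq_blockStart_add hL hi,
    (blockIndex_eq_iff hL (m := m)).mpr ⟨by omega, by simp [blockStart]; omega⟩]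
  exact List.getElem_mem hi

lemma exists_concatSeq_eq (hL : ∀ m, L m ≠ []) {m : ℕ} {x : α} (hx : x ∈ L m) :
    ∃ k, concatSeq L k = x := by
  obtain ⟨i, hi, rfl⟩ := List.getElem_of_mem hx
  exact ⟨_, concatSeq_blockStart_add hL hi⟩

lemma concatSeq_injective (hL : ∀ m, L m ≠ []) (hnodup : ∀ m, (L m).Nodup)
    (hdisj : ∀ m m' x, x ∈ L m → x ∈ L m' → m = m') : Function.Injective (concatSeq L) := by
  intro k k' h
  obtain ⟨m, i, hi, rfl⟩ := exists_eq_blockStart_add hL k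
  obtain ⟨m', i', hi', rfl⟩ := exists_eq_blockStart_add hL k'
  rw [concatSeq_blockStart_add hL hi, concatSeq_blockStart_add hL hi'] at h
  obtain rfl := hdisj m m' _ (List.getElem_mem hi) (h ▸ List.getElem_mem hi')
  rw [(hnodup m).getElem_inj_iff.mp h]

lemma concatSeq_blockStart_mem_head? (hL : ∀ m, L m ≠ []) (m : ℕ) :
    concatSeq L (blockStart L m) ∈ (L m).head? := by
  have hpos := List.length_pos_iff.mpr (hL m)
  simpa [List.head?_eq_getElem?, List.getElem?_eq_getElem hpos] using
    (concatSeq_blockStart_add hL hpos).symm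

lemma concatSeq_blockStart_succ_sub_one_mem_getLast? (hL : ∀ m, L m ≠ []) (m : ℕ) :
    concatSeq L (blockStart L (m + 1) - 1) ∈ (L m).getLast? := by
  have hlast : (L m).length - 1 < (L m).length := by
    have := List.length_pos_iff.mpr (hL m)
    omega
  have := concatSeq_blockStart_add hL hlast
  rw [← Nat.add_sub_assoc (List.length_pos_iff.mpr (hL m))] at this
  simpa [List.getLast?_eq_getElem?, List.getElem?_eq_getElem hlast, blockStart] using this.symm

lemma concatSeq_rel_succ (hL : ∀ m, L m ≠ []) {R : α → α → Prop}
    (hchain : ∀ m, (L m).IsChain R)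
    (hseam : ∀ m, ∀ x ∈ (L m).getLast?, ∀ y ∈ (L (m + 1)).head?, R x y) (k : ℕ) :
    R (concatSeq L k) (concatSeq L (k + 1)) := by
  obtain ⟨m, i, hi, rfl⟩ := exists_eq_blockStart_add hL k
  by_cases hi' : i + 1 < (L m).length
  · rw [add_assoc, concatSeq_blockStart_add hL hi, concatSeq_blockStart_add hL hi']
    exact (hchain m).getElem i hi'
  · have hk : blockStart L m + i = blockStart L (m + 1) - 1 := by simp [blockStart]; omega
    have hk' : blockStart L m + i + 1 = blockStart L (m + 1) := by simp [blockStart]; omega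
    rw [hk', hk]
    exact hseam m _ (concatSeq_blockStart_succ_sub_one_mem_getLast? hL m) _
      (concatSeq_blockStart_mem_head? hL (m + 1))

end Concatenation

def graySequence (k : ℕ+) : Multiset ℕ := concatSeq grayList k.natPred

lemma graySequence_mem_grayList (k : ℕ+) :
    graySequence k ∈ grayList (blockIndex grayList k.natPred) :=
  concatSeq_mem grayList_ne_nil _

lemma isEvenBinaryPartition_graySequence (k : ℕ+) : IsEvenBinaryPartition (graySequence k) :=
  (mem_grayList_iff.mp (graySequence_mem_grayList k)).1

lemma sum_graySequence (k : ℕ+) :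
    (graySequence k).sum = 2 * blockIndex grayList k.natPred :=
  (mem_grayList_iff.mp (graySequence_mem_grayList k)).2

lemma sum_graySequence_eq_iff {k : ℕ+} {m : ℕ} : (graySequence k).sum = 2 * m ↔
    blockStart grayList m ≤ k.natPred ∧ k.natPred < blockStart grayList (m + 1) := by
  rw [sum_graySequence, ← blockIndex_eq_iff grayList_ne_nil]
  omega

lemma graySequence_injective : Function.Injective graySequence := by
  refine (concatSeq_injective grayList_ne_nil nodup_grayList fun m m' P hP hP' => ?_).comp
    PNat.natPred_injective
  have := (mem_grayList_iff.mp hP).2.symm.trans (mem_grayList_iff.mp hP').2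
  omega

lemma exists_graySequence_eq {P : Multiset ℕ} (hP : IsEvenBinaryPartition P) :
    ∃ k, graySequence k = P := by
  obtain ⟨m, hm⟩ := hP.two_dvd_sum
  obtain ⟨k, hk⟩ := exists_concatSeq_eq grayList_ne_nil (mem_grayList_iff.mpr ⟨hP, hm⟩)
  exact ⟨k.succPNat, by simpa [graySequence] using hk⟩

lemma graySequence_one : graySequence 1 = 0 := by
  have := concatSeq_blockStart_mem_head? grayList_ne_nil 0
  simp only [grayList_zero, List.head?_cons, Option.mem_def, Option.some.injEq] at this
  exact this.symm

lemma monotone_sum_graySequence : Monotone fun k => (graySequence k).sum := by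
  intro k l hkl
  simp only [sum_graySequence]
  gcongr
  exact (gc_blockStart_blockIndex grayList_ne_nil).monotone_u (PNat.natPred_le_natPred.mpr hkl)

lemma graySequence_succ (k : ℕ+) : EvenElementaryMove (graySequence k) (graySequence (k + 1)) ∨
    graySequence (k + 1) = graySequence k + {2} := by
  have hseam : ∀ m, ∀ P ∈ (grayList m).getLast?, ∀ Q ∈ (grayList (m + 1)).head?,
      EvenElementaryMove P Q ∨ Q = P + {2} := by
    intro m P hP Q hQ
    rw [head?_grayList_succ, Option.mem_map] at hQ
    obtain ⟨P', hP', rfl⟩ := hQ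
    exact Or.inr (by rw [Option.mem_unique hP hP'])
  have := concatSeq_rel_succ grayList_ne_nil (fun m => (isChain_grayList m).imp fun _ _ => Or.inl)
    hseam k.natPred
  have hsucc : (k + 1).natPred = k.natPred + 1 := by
    simp only [PNat.natPred, PNat.add_coe, PNat.one_coe]
    have := k.pos
    omega
  simpa only [graySequence, hsucc] using this

lemma exists_graySequence_last {m : ℕ} {P : Multiset ℕ} (hP : P ∈ (grayList m).getLast?) :
    ∃ kL : ℕ+, graySequence kL = P ∧ ∀ l, kL < l → (graySequence l).sum ≠ 2 * m := by
  refine ⟨(blockStart grayList (m + 1) - 1).succPNat, ?_, fun l hl => ?_⟩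
  · have := concatSeq_blockStart_succ_sub_one_mem_getLast? grayList_ne_nil m
    exact Option.mem_unique (by simpa [graySequence] using this) hP
  · rw [← PNat.natPred_lt_natPred, Nat.natPred_succPNat] at hl
    rw [Ne, sum_graySequence_eq_iff]
    omega

lemma exists_graySequence_first (m : ℕ) :
    ∃ kF kP : ℕ+, (graySequence kF).sum = 2 * (m + 1) ∧
      (∀ l, l < kF → (graySequence l).sum ≠ 2 * (m + 1)) ∧
      (graySequence kP).sum = 2 * m ∧ (∀ l, kP < l → (graySequence l).sum ≠ 2 * m) ∧
      graySequence kF = graySequence kP + {2} := by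
  have hS := blockStart_strictMono grayList_ne_nil
  have h₀ := hS (Nat.lt_add_one m)
  have h₁ := hS (Nat.lt_add_one (m + 1))
  have hF := concatSeq_blockStart_mem_head? grayList_ne_nil (m + 1)
  have hP := concatSeq_blockStart_succ_sub_one_mem_getLast? grayList_ne_nil m
  refine ⟨(blockStart grayList (m + 1)).succPNat, (blockStart grayList (m + 1) - 1).succPNat,
    ?_, fun l hl => ?_, ?_, fun l hl => ?_, ?_⟩
  · rw [sum_graySequence_eq_iff, Nat.natPred_succPNat]
    omega
  · rw [← PNat.natPred_lt_natPred, Nat.natPred_succPNat] at hl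
    rw [Ne, sum_graySequence_eq_iff]
    omega
  · rw [sum_graySequence_eq_iff, Nat.natPred_succPNat]
    omega
  · rw [← PNat.natPred_lt_natPred, Nat.natPred_succPNat] at hl
    rw [Ne, sum_graySequence_eq_iff]
    omega
  · rw [head?_grayList_succ, Option.mem_map] at hF
    obtain ⟨P, hP', hPF⟩ := hF
    simp only [graySequence, Nat.natPred_succPNat]
    rw [← hPF, Option.mem_unique hP hP']

theorem gray_sequence_first_last_of_each_sum :
    ∃ B : ℕ+ → Multiset ℕ,
      (∀ k, IsEvenBinaryPartition (B k)) ∧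
      Function.Injective B ∧
      (∀ P : Multiset ℕ, IsEvenBinaryPartition P → ∃ k, B k = P) ∧
      B 1 = 0 ∧
      Monotone (fun k => (B k).sum) ∧
      (∀ k, EvenElementaryMove (B k) (B (k + 1)) ∨ B (k + 1) = B k + {2}) ∧
      (∀ n a c : ℕ, 2 ≤ n → Even n → Odd c → n = 2 ^ a * c →
        -- the last term of B with sum n consists of c parts equal to 2^a
        (∃ kL : ℕ+, B kL = Multiset.replicate c (2 ^ a) ∧
          ∀ l : ℕ+, kL < l → (B l).sum ≠ n) ∧
        -- the first term of B with sum n is the last term with sum n-2 plus one part 2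
        (∃ kF kP : ℕ+, (B kF).sum = n ∧ (∀ l : ℕ+, l < kF → (B l).sum ≠ n) ∧
          (B kP).sum = n - 2 ∧ (∀ l : ℕ+, kP < l → (B l).sum ≠ n - 2) ∧
          B kF = B kP + {2})) := by
  refine ⟨graySequence, isEvenBinaryPartition_graySequence, graySequence_injective,
    fun P => exists_graySequence_eq, graySequence_one, monotone_sum_graySequence,
    graySequence_succ, fun n a c hn hn_even hc hnac => ?_⟩
  obtain ⟨m, rfl⟩ : ∃ m, n = 2 * (m + 1) := ⟨n / 2 - 1, by obtain ⟨t, ht⟩ := hn_even; omega⟩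
  obtain ⟨a, rfl⟩ : ∃ a', a = a' + 1 := by
    refine ⟨a - 1, (Nat.succ_pred_eq_of_ne_zero fun ha => ?_).symm⟩
    rw [ha, pow_zero, one_mul] at hnac
    exact Nat.not_even_iff_odd.mpr hc (hnac ▸ hn_even)
  have hm : m + 1 = 2 ^ a * c := by
    rw [pow_succ', mul_assoc] at hnac
    exact Nat.eq_of_mul_eq_mul_left two_pos hnac
  refine ⟨exists_graySequence_last ?_, ?_⟩
  · rw [hm, getLast?_grayList_two_pow_mul hc]
    rfl
  · rw [show 2 * (m + 1) - 2 = 2 * m by omega]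
    exact exists_graySequence_first m
end
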